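/- arXiv:1911.08613 — 11 statements merged into one kernel-verified Lean document; each statement's English description precedes it below -/
import Mathlib

section
/- For every natural number n ≥ 0 and every real α with 0 ≤ α ≤ 1/2, we have ∑_{k=n+1}^{2n+1} C(2n+1,k) α^{k}(1-α)^{2n+1-k} ≤ α. -/
/-- For a Binomial(2n+1, α) random variable with α ≤ 1/2, the probability of strictly
more than n successes is at most α. -/
theorem stmt_1 (n : ℕ) (α : ℝ) (hα0 : 0 ≤ α) (hα : α ≤ 1 / 2) :
    ∑ k ∈ Finset.Icc (n + 1) (2 * n + 1),
        (Nat.choose (2 * n + 1) k : ℝ) * α ^ k * (1 - α) ^ (2 * n + 1 - k) ≤ α := by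
  set β : ℝ := 1 - α with hβdef
  have hβ0 : 0 ≤ β := by simp [hβdef]; linarith
  have hαβ : α ≤ β := by simp [hβdef]; linarith
  set f : ℕ → ℝ := fun k => (Nat.choose (2 * n + 1) k : ℝ) * α ^ k * β ^ (2 * n + 1 - k)
    with hf
  set S : ℝ := ∑ k ∈ Finset.Icc (n + 1) (2 * n + 1), f k with hS
  set T : ℝ := ∑ k ∈ Finset.range (n + 1), f k with hT
  have htotal : T + S = 1 := by
    have h1 : Finset.Icc (n + 1) (2 * n + 1) = Finset.Ico (n + 1) (2 * n + 1 + 1) := by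
      rw [Finset.Ico_add_one_right_eq_Icc]
    have h2 : Finset.range (n + 1) = Finset.Ico 0 (n + 1) := by
      rw [Finset.range_eq_Ico]
    rw [hT, hS, h1, h2, Finset.sum_Ico_consecutive f (by omega) (by omega)]
    have hbin := add_pow α β (2 * n + 1)
    have hαβ1 : α + β = 1 := by simp [hβdef]
    rw [hαβ1, one_pow] at hbin
    rw [← Finset.range_eq_Ico, hbin]
    apply Finset.sum_congr rfl
    intro k hk
    simp only [hf]; ring
  have key : ∀ k ∈ Finset.Icc (n + 1) (2 * n + 1), β * f k ≤ α * f (2 * n + 1 - k) := by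
    intro k hk
    simp only [Finset.mem_Icc] at hk
    obtain ⟨h1, h2⟩ := hk
    have hc : Nat.choose (2 * n + 1) (2 * n + 1 - k) = Nat.choose (2 * n + 1) k :=
      Nat.choose_symm h2
    set m : ℕ := 2 * n + 1 - k with hm
    have hsub : 2 * n + 1 - m = k := by omega
    set d : ℕ := k - m - 1 with hd
    have hkeq : k = (m + 1) + d := by omega
    have hC : (0 : ℝ) ≤ (Nat.choose (2 * n + 1) k : ℝ) := Nat.cast_nonneg _
    have hpow : α ^ d ≤ β ^ d := pow_le_pow_left₀ hα0 hαβ d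
    have main : α ^ k * β ^ (m + 1) ≤ α ^ (m + 1) * β ^ k := by
      have e1 : α ^ k = α ^ (m + 1) * α ^ d := by rw [hkeq, pow_add]
      have e2 : β ^ k = β ^ (m + 1) * β ^ d := by rw [hkeq, pow_add]
      rw [e1, e2]
      have h0 : (0 : ℝ) ≤ α ^ (m + 1) * β ^ (m + 1) := by positivity
      calc α ^ (m + 1) * α ^ d * β ^ (m + 1)
          = (α ^ (m + 1) * β ^ (m + 1)) * α ^ d := by ring
        _ ≤ (α ^ (m + 1) * β ^ (m + 1)) * β ^ d := mul_le_mul_of_nonneg_left hpow h0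
        _ = α ^ (m + 1) * (β ^ (m + 1) * β ^ d) := by ring
    simp only [hf, hc, hsub]
    calc β * ((Nat.choose (2 * n + 1) k : ℝ) * α ^ k * β ^ m)
        = (Nat.choose (2 * n + 1) k : ℝ) * (α ^ k * β ^ (m + 1)) := by ring
      _ ≤ (Nat.choose (2 * n + 1) k : ℝ) * (α ^ (m + 1) * β ^ k) :=
          mul_le_mul_of_nonneg_left main hC
      _ = α * ((Nat.choose (2 * n + 1) k : ℝ) * α ^ m * β ^ k) := by ring
  have reflect : ∑ k ∈ Finset.Icc (n + 1) (2 * n + 1), α * f (2 * n + 1 - k)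
      = ∑ j ∈ Finset.range (n + 1), α * f j := by
    apply Finset.sum_nbij' (i := fun k => 2 * n + 1 - k) (j := fun j => 2 * n + 1 - j)
    · intro a ha; simp only [Finset.mem_Icc] at ha; simp only [Finset.mem_range]; omega
    · intro a ha; simp only [Finset.mem_range] at ha; simp only [Finset.mem_Icc]; omega
    · intro a ha; simp only [Finset.mem_Icc] at ha; omega
    · intro a ha; simp only [Finset.mem_range] at ha; omega
    · intro a ha; rfl
  have hβS : β * S ≤ α * T := by
    calc β * S = ∑ k ∈ Finset.Icc (n + 1) (2 * n + 1), β * f k := by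
          rw [hS, Finset.mul_sum]
      _ ≤ ∑ k ∈ Finset.Icc (n + 1) (2 * n + 1), α * f (2 * n + 1 - k) :=
          Finset.sum_le_sum key
      _ = ∑ j ∈ Finset.range (n + 1), α * f j := reflect
      _ = α * T := by rw [hT, Finset.mul_sum]
  have hSsplit : S = α * S + β * S := by rw [hβdef]; ring
  nlinarith [hβS, htotal]
end

section
/- Fix a natural number n ≥ 0 and a real t ≥ 0. Then the function G : [0,1/2] → ℝ defined by G(α) = e^{-t}·α + (1 − e^{-t})·∑_{k=n+1}^{2n+1} C(2n+1,k) α^{k}(1-α)^{2n+1-k} is convex on the interval [0,1/2]. -/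
open Finset

/-- The tail sum has derivative `(2n+1) * C(2n,n) * (α(1-α))^n`. -/
lemma hasDerivAt_tail (n : ℕ) (α : ℝ) :
    HasDerivAt (fun α : ℝ =>
      ∑ k ∈ Finset.Icc (n + 1) (2 * n + 1),
        (Nat.choose (2 * n + 1) k : ℝ) * α ^ k * (1 - α) ^ (2 * n + 1 - k))
      ((2 * n + 1) * (Nat.choose (2 * n) n : ℝ) * (α * (1 - α)) ^ n) α := by
  set b : ℕ → ℝ := fun j => (Nat.choose (2 * n) j : ℝ) * α ^ j * (1 - α) ^ (2 * n - j) with hb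
  have key : ∀ k ∈ Finset.Icc (n + 1) (2 * n + 1),
      HasDerivAt (fun α : ℝ => (Nat.choose (2 * n + 1) k : ℝ) * α ^ k * (1 - α) ^ (2 * n + 1 - k))
        ((2 * n + 1) * (b (k - 1) - b k)) α := by
    intro k hk
    simp only [Finset.mem_Icc] at hk
    obtain ⟨hk1, hk2⟩ := hk
    have h1 : HasDerivAt (fun α : ℝ => α ^ k) ((k : ℝ) * α ^ (k - 1)) α := by
      simpa using hasDerivAt_pow k α
    have h2 : HasDerivAt (fun α : ℝ => (1 - α) ^ (2 * n + 1 - k))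
        (-(((2 * n + 1 - k : ℕ) : ℝ) * (1 - α) ^ (2 * n + 1 - k - 1))) α := by
      have := (hasDerivAt_pow (2 * n + 1 - k) (1 - α)).comp α
        ((hasDerivAt_const α (1:ℝ)).sub (hasDerivAt_id α))
      simpa [Function.comp_def] using this
    have h3 := ((h1.mul h2).const_mul ((Nat.choose (2 * n + 1) k : ℝ)))
    have harr : (fun α : ℝ => (Nat.choose (2 * n + 1) k : ℝ) * α ^ k * (1 - α) ^ (2 * n + 1 - k))
        = fun α : ℝ => (Nat.choose (2 * n + 1) k : ℝ) * (α ^ k * (1 - α) ^ (2 * n + 1 - k)) := by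
      funext x; ring
    rw [harr]
    refine h3.congr_deriv ?_
    symm
    -- derivative value identity
    have id1 : ((2 * n + 1 : ℕ) : ℝ) * (Nat.choose (2 * n) (k - 1) : ℝ)
        = (Nat.choose (2 * n + 1) k : ℝ) * (k : ℝ) := by
      have h := Nat.add_one_mul_choose_eq (2 * n) (k - 1)
      rw [Nat.sub_add_cancel (by omega : 1 ≤ k)] at h
      exact_mod_cast h
    have id2 : (Nat.choose (2 * n + 1) k : ℝ) * ((2 * n + 1 - k : ℕ) : ℝ)
        = ((2 * n + 1 : ℕ) : ℝ) * (Nat.choose (2 * n) k : ℝ) := by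
      have h := Nat.choose_mul_succ_eq (2 * n) k
      rw [mul_comm ((2 * n + 1 : ℕ) : ℝ)]
      exact_mod_cast h.symm
    have e1 : 2 * n - (k - 1) = 2 * n + 1 - k := by omega
    have e2 : 2 * n - k = 2 * n + 1 - k - 1 := by omega
    simp only [hb]
    rw [e1, e2]
    push_cast [Nat.cast_sub hk2] at id1 id2 ⊢
    linear_combination ((1 - α) ^ (2 * n + 1 - k) * α ^ (k - 1)) * id1
      + (α ^ k * (1 - α) ^ (2 * n + 1 - k - 1)) * id2
  have hsum := HasDerivAt.fun_sum key
  refine hsum.congr_deriv ?_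
  symm
  -- telescoping
  have hIcc : Finset.Icc (n + 1) (2 * n + 1) = Finset.Ico (n + 1) (2 * n + 2) := by
    rw [← Finset.Ico_add_one_right_eq_Icc]; rfl
  rw [hIcc, Finset.sum_Ico_eq_sum_range]
  have hn : 2 * n + 2 - (n + 1) = n + 1 := by omega
  rw [hn]
  have : ∀ i, (2 * n + 1 : ℝ) * (b (n + 1 + i - 1) - b (n + 1 + i))
      = (2 * n + 1 : ℝ) * b (n + i) - (2 * n + 1 : ℝ) * b (n + (i + 1)) := by
    intro i
    have : n + 1 + i - 1 = n + i := by omega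
    rw [this]
    ring_nf
  rw [Finset.sum_congr rfl fun i _ => this i, Finset.sum_range_sub' (fun i => (2 * n + 1 : ℝ) * b (n + i))]
  have hbz : b (n + (n + 1)) = 0 := by
    simp only [hb]
    rw [Nat.choose_eq_zero_of_lt (by omega)]
    simp
  rw [hbz]
  simp only [hb, Nat.add_zero]
  have : 2 * n - n = n := by omega
  rw [this, mul_pow]
  ring

/-- Convexity in α on [0,1/2] of the marginal `μ_t(α)` of median dynamics on `K_{2n+1}`. -/
theorem stmt_3 (n : ℕ) (t : ℝ) (ht : 0 ≤ t) :
    ConvexOn ℝ (Set.Icc (0 : ℝ) (1 / 2)) (fun α : ℝ =>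
      Real.exp (-t) * α + (1 - Real.exp (-t)) *
        ∑ k ∈ Finset.Icc (n + 1) (2 * n + 1),
          (Nat.choose (2 * n + 1) k : ℝ) * α ^ k * (1 - α) ^ (2 * n + 1 - k)) := by
  have hderiv : ∀ α : ℝ, HasDerivAt (fun α : ℝ =>
      Real.exp (-t) * α + (1 - Real.exp (-t)) *
        ∑ k ∈ Finset.Icc (n + 1) (2 * n + 1),
          (Nat.choose (2 * n + 1) k : ℝ) * α ^ k * (1 - α) ^ (2 * n + 1 - k))
      (Real.exp (-t) + (1 - Real.exp (-t)) *
        ((2 * n + 1) * (Nat.choose (2 * n) n : ℝ) * (α * (1 - α)) ^ n)) α := by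
    intro α
    simpa using ((hasDerivAt_id α).const_mul (Real.exp (-t))).fun_add
      ((hasDerivAt_tail n α).const_mul (1 - Real.exp (-t)))
  have hexp : Real.exp (-t) ≤ 1 := by
    rw [← Real.exp_zero]
    exact Real.exp_le_exp.mpr (by linarith)
  apply MonotoneOn.convexOn_of_deriv (convex_Icc _ _)
  · exact fun x _ => ((hderiv x).continuousAt).continuousWithinAt
  · exact fun x _ => ((hderiv x).differentiableAt).differentiableWithinAt
  · intro x hx y hy hxy
    rw [(hderiv x).deriv, (hderiv y).deriv]
    rw [interior_Icc] at hx hy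
    obtain ⟨hx0, hx2⟩ := hx
    obtain ⟨hy0, hy2⟩ := hy
    have hmul : x * (1 - x) ≤ y * (1 - y) := by nlinarith
    have hpos : 0 ≤ x * (1 - x) := by nlinarith
    have hpow : (x * (1 - x)) ^ n ≤ (y * (1 - y)) ^ n :=
      pow_le_pow_left₀ hpos hmul n
    have h1 : (0 : ℝ) ≤ 1 - Real.exp (-t) := by linarith
    have h2 : (0 : ℝ) ≤ (2 * (n : ℝ) + 1) * (Nat.choose (2 * n) n : ℝ) := by positivity
    have key := mul_le_mul_of_nonneg_left hpow (mul_nonneg h1 h2)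
    nlinarith [key]
end

section
/- For every natural number n ≥ 1 and every real α with 0 ≤ α ≤ 1/2, we have ∑_{k=n+1}^{2n} C(2n,k) α^{k}(1-α)^{2n-k} + (1/2)·C(2n,n)·(α(1-α))^{n} ≤ α. -/
/-- Mean of the binomial: `∑ k·C(M+1,k) x^k y^(M+1-k) = (M+1)·x·(x+y)^M`. -/
lemma stmt4_mean_aux (M : ℕ) (x y : ℝ) :
    ∑ k ∈ Finset.range (M + 2), (k : ℝ) * (Nat.choose (M + 1) k) * x ^ k * y ^ (M + 1 - k)
      = ((M + 1 : ℕ) : ℝ) * x * (x + y) ^ M := by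
  rw [Finset.sum_range_succ']
  have h0 : ((0 : ℕ) : ℝ) * (Nat.choose (M + 1) 0) * x ^ 0 * y ^ (M + 1 - 0) = 0 := by simp
  rw [h0, add_zero]
  have hcong : ∀ k ∈ Finset.range (M + 1),
      ((k + 1 : ℕ) : ℝ) * (Nat.choose (M + 1) (k + 1)) * x ^ (k + 1) * y ^ (M + 1 - (k + 1))
        = ((M + 1 : ℕ) : ℝ) * x * (x ^ k * y ^ (M - k) * (Nat.choose M k : ℝ)) := by
    intro k hk
    have hid : (M + 1) * Nat.choose M k = Nat.choose (M + 1) (k + 1) * (k + 1) :=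
      Nat.add_one_mul_choose_eq M k
    have hidR : ((M + 1 : ℕ) : ℝ) * (Nat.choose M k : ℝ)
        = (Nat.choose (M + 1) (k + 1) : ℝ) * ((k + 1 : ℕ) : ℝ) := by exact_mod_cast hid
    have hsub : M + 1 - (k + 1) = M - k := by omega
    rw [hsub, pow_succ]
    push_cast at hidR ⊢
    linear_combination (-(x ^ k * x * y ^ (M - k))) * hidR
  rw [Finset.sum_congr rfl hcong, ← Finset.mul_sum, add_pow]

/-- For a Binomial(2n, α) random variable with α ≤ 1/2, the probability of strictly more
than n successes plus half the probability of exactly n successes is at most α. -/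
theorem stmt_4 (n : ℕ) (hn : 1 ≤ n) (α : ℝ) (hα0 : 0 ≤ α) (hα : α ≤ 1 / 2) :
    (∑ k ∈ Finset.Icc (n + 1) (2 * n),
        (Nat.choose (2 * n) k : ℝ) * α ^ k * (1 - α) ^ (2 * n - k))
      + (1 / 2) * (Nat.choose (2 * n) n : ℝ) * (α * (1 - α)) ^ n ≤ α := by
  set N := 2 * n with hN
  have hβ : (0:ℝ) ≤ 1 - α := by linarith
  have hαβ : α ≤ 1 - α := by linarith
  set f : ℕ → ℝ := fun k => (k : ℝ) * (Nat.choose N k) * α ^ k * (1 - α) ^ (N - k) with hf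
  set p : ℕ → ℝ := fun k => (Nat.choose N k : ℝ) * α ^ k * (1 - α) ^ (N - k) with hp
  -- the mean identity
  have hmean : ∑ k ∈ Finset.range (N + 1), f k = (N : ℝ) * α := by
    have h := stmt4_mean_aux (N - 1) α (1 - α)
    have hN1 : N - 1 + 1 = N := by omega
    have hN2 : N - 1 + 2 = N + 1 := by omega
    rw [hN1, hN2] at h
    simpa [hf] using h
  -- split the sum
  have hsplit : ∑ k ∈ Finset.range (N + 1), f k
      = (∑ k ∈ Finset.Ico 0 n, f k) + (f n + ∑ k ∈ Finset.Icc (n + 1) N, f k) := by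
    rw [Finset.range_eq_Ico,
      ← Finset.sum_Ico_consecutive f (Nat.zero_le n) (by omega : n ≤ N + 1),
      Finset.sum_eq_sum_Ico_succ_bot (by omega : n < N + 1) f, Finset.Ico_add_one_right_eq_Icc]
  -- reflect the lower part
  have hrefl : ∑ k ∈ Finset.Ico 0 n, f k = ∑ k ∈ Finset.Icc (n + 1) N, f (N - k) := by
    apply Finset.sum_nbij' (i := fun k => N - k) (j := fun k => N - k)
    · intro a ha
      simp only [Finset.mem_Ico, Finset.mem_Icc] at *
      omega
    · intro a ha
      simp only [Finset.mem_Ico, Finset.mem_Icc] at *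
      omega
    · intro a ha
      simp only [Finset.mem_Ico] at ha
      omega
    · intro a ha
      simp only [Finset.mem_Icc] at ha
      omega
    · intro a ha
      simp only [Finset.mem_Ico] at ha
      congr 1
      omega
  -- termwise inequality on the paired sum
  have hterm : ∀ k ∈ Finset.Icc (n + 1) N, (N : ℝ) * p k ≤ f (N - k) + f k := by
    intro k hk
    simp only [Finset.mem_Icc] at hk
    obtain ⟨hk1, hk2⟩ := hk
    have hCk : Nat.choose N (N - k) = Nat.choose N k := Nat.choose_symm hk2
    have hNNk : N - (N - k) = k := by omega
    have hq : α ^ k * (1 - α) ^ (N - k) ≤ α ^ (N - k) * (1 - α) ^ k := by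
      have hd : α ^ (k - (N - k)) ≤ (1 - α) ^ (k - (N - k)) :=
        pow_le_pow_left₀ hα0 hαβ _
      have ha : α ^ k = α ^ (N - k) * α ^ (k - (N - k)) := by
        rw [← pow_add]; congr 1; omega
      have hb : (1 - α) ^ k = (1 - α) ^ (N - k) * (1 - α) ^ (k - (N - k)) := by
        rw [← pow_add]; congr 1; omega
      calc α ^ k * (1 - α) ^ (N - k)
          = (α ^ (N - k) * (1 - α) ^ (N - k)) * α ^ (k - (N - k)) := by rw [ha]; ring
        _ ≤ (α ^ (N - k) * (1 - α) ^ (N - k)) * (1 - α) ^ (k - (N - k)) := by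
            apply mul_le_mul_of_nonneg_left hd
            positivity
        _ = α ^ (N - k) * (1 - α) ^ k := by rw [hb]; ring
    have hcastNk : ((N - k : ℕ) : ℝ) = (N : ℝ) - (k : ℝ) := by
      push_cast [Nat.cast_sub hk2]; ring
    have hkN : (k : ℝ) ≤ (N : ℝ) := by exact_mod_cast hk2
    simp only [hf, hp, hCk, hNNk, hcastNk]
    have hC : (0:ℝ) ≤ (Nat.choose N k : ℝ) := by positivity
    nlinarith [mul_le_mul_of_nonneg_left hq hC, mul_nonneg (sub_nonneg.mpr hkN)
      (mul_nonneg hC (sub_nonneg.mpr (le_of_eq (rfl : α ^ k * (1-α)^(N-k) = α ^ k * (1-α)^(N-k)))))]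
  -- put it together
  have hfn : f n = (n : ℝ) * (Nat.choose N n : ℝ) * (α * (1 - α)) ^ n := by
    have : N - n = n := by omega
    simp only [hf, this, mul_pow]
    ring
  have hbig : (N : ℝ) * (∑ k ∈ Finset.Icc (n + 1) N, p k) + f n ≤ (N : ℝ) * α := by
    have hcomb : (N : ℝ) * (∑ k ∈ Finset.Icc (n + 1) N, p k)
        ≤ (∑ k ∈ Finset.Icc (n + 1) N, f (N - k)) + ∑ k ∈ Finset.Icc (n + 1) N, f k := by
      rw [Finset.mul_sum]
      calc ∑ k ∈ Finset.Icc (n + 1) N, (N : ℝ) * p k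
          ≤ ∑ k ∈ Finset.Icc (n + 1) N, (f (N - k) + f k) := Finset.sum_le_sum hterm
        _ = _ := Finset.sum_add_distrib
    rw [← hmean, hsplit, hrefl]
    linarith
  have hNR : ((N : ℕ) : ℝ) = 2 * (n : ℝ) := by push_cast [hN]; ring
  have hnpos : (0:ℝ) < (n : ℝ) := by exact_mod_cast hn
  rw [hNR] at hbig
  rw [hfn] at hbig
  have hnn : (0:ℝ) < 2 * (n:ℝ) := by linarith
  rw [← sub_nonneg]
  have := hbig
  nlinarith [hbig]
end

section
/- For every natural number n ≥ 1 and every real α, we have (∑_{k=n+1}^{2n} k·C(2n,k)·α^{k-1}(1-α)^{2n-k} − ∑_{k=n+1}^{2n-1} (2n−k)·C(2n,k)·α^{k}(1-α)^{2n-k-1}) + (n/2)·C(2n,n)·(α(1-α))^{n-1}·(1−2α) = (n/2)·C(2n,n)·(α(1-α))^{n-1}. -/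
/-- The derivative in α of the marginal of median dynamics on `K_{2n}` equals
`(n/2)·C(2n,n)·(α(1-α))^{n-1}`. -/
theorem stmt_7 (n : ℕ) (hn : 1 ≤ n) (α : ℝ) :
    ((∑ k ∈ Finset.Icc (n + 1) (2 * n),
        (k : ℝ) * (Nat.choose (2 * n) k : ℝ) * α ^ (k - 1) * (1 - α) ^ (2 * n - k))
      - (∑ k ∈ Finset.Icc (n + 1) (2 * n - 1),
        ((2 * n - k : ℕ) : ℝ) * (Nat.choose (2 * n) k : ℝ) * α ^ k *
          (1 - α) ^ (2 * n - k - 1)))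
      + ((n : ℝ) / 2) * (Nat.choose (2 * n) n : ℝ) * (α * (1 - α)) ^ (n - 1) * (1 - 2 * α)
    = ((n : ℝ) / 2) * (Nat.choose (2 * n) n : ℝ) * (α * (1 - α)) ^ (n - 1) := by
  obtain ⟨m, rfl⟩ : ∃ m, n = m + 1 := ⟨n - 1, (Nat.succ_pred_eq_of_pos hn).symm⟩
  have h2n' : 2 * (m + 1) - 1 = 2 * m + 1 := by omega
  -- Step A: reindex the first sum
  have hA : (∑ k ∈ Finset.Icc (m + 1 + 1) (2 * (m + 1)),
        (k : ℝ) * (Nat.choose (2 * (m + 1)) k : ℝ) * α ^ (k - 1) * (1 - α) ^ (2 * (m + 1) - k))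
      = ∑ j ∈ Finset.Icc (m + 1) (2 * m + 1),
        (2 * (m + 1) : ℝ) * (Nat.choose (2 * m + 1) j : ℝ) * α ^ j * (1 - α) ^ (2 * m + 1 - j) := by
    have hmap : Finset.Icc (m + 1 + 1) (2 * (m + 1))
        = (Finset.Icc (m + 1) (2 * m + 1)).map (addRightEmbedding 1) := by
      rw [Finset.map_add_right_Icc, show 2 * m + 1 + 1 = 2 * (m + 1) by ring]
    rw [hmap, Finset.sum_map]
    refine Finset.sum_congr rfl fun j hj => ?_
    simp only [addRightEmbedding_apply]
    have hc : (2 * m + 1 + 1) * Nat.choose (2 * m + 1) j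
        = Nat.choose (2 * m + 1 + 1) (j + 1) * (j + 1) := Nat.add_one_mul_choose_eq (2 * m + 1) j
    have hsub : 2 * (m + 1) - (j + 1) = 2 * m + 1 - j := by omega
    have hsub1 : j + 1 - 1 = j := by omega
    have h22 : 2 * (m + 1) = 2 * m + 1 + 1 := by ring
    rw [hsub, hsub1]
    have hcr : ((j : ℝ) + 1) * (Nat.choose (2 * (m + 1)) (j + 1) : ℝ)
        = (2 * (m + 1) : ℝ) * (Nat.choose (2 * m + 1) j : ℝ) := by
      rw [h22]
      have := congrArg (Nat.cast (R := ℝ)) hc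
      push_cast at this ⊢
      linarith
    push_cast
    push_cast at hcr
    linear_combination α ^ j * (1 - α) ^ (2 * m + 1 - j) * hcr
  -- Step B: rewrite the second sum
  have hB : (∑ k ∈ Finset.Icc (m + 1 + 1) (2 * (m + 1) - 1),
        ((2 * (m + 1) - k : ℕ) : ℝ) * (Nat.choose (2 * (m + 1)) k : ℝ) * α ^ k *
          (1 - α) ^ (2 * (m + 1) - k - 1))
      = ∑ k ∈ Finset.Icc (m + 1 + 1) (2 * m + 1),
        (2 * (m + 1) : ℝ) * (Nat.choose (2 * m + 1) k : ℝ) * α ^ k * (1 - α) ^ (2 * m + 1 - k) := by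
    rw [h2n']
    refine Finset.sum_congr rfl fun k hk => ?_
    have hk' := Finset.mem_Icc.mp hk
    have hc : Nat.choose (2 * m + 1) k * (2 * m + 1 + 1)
        = Nat.choose (2 * m + 1 + 1) k * (2 * m + 1 + 1 - k) := Nat.choose_mul_succ_eq (2 * m + 1) k
    have h22 : 2 * (m + 1) = 2 * m + 1 + 1 := by ring
    have hsub : 2 * (m + 1) - k - 1 = 2 * m + 1 - k := by omega
    rw [hsub]
    have hcr : ((2 * (m + 1) - k : ℕ) : ℝ) * (Nat.choose (2 * (m + 1)) k : ℝ)
        = (2 * (m + 1) : ℝ) * (Nat.choose (2 * m + 1) k : ℝ) := by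
      rw [h22]
      have := congrArg (Nat.cast (R := ℝ)) hc
      have hkle : k ≤ 2 * m + 1 + 1 := by omega
      push_cast [Nat.cast_sub hkle] at this ⊢
      linarith
    linear_combination α ^ k * (1 - α) ^ (2 * m + 1 - k) * hcr
  rw [hA, hB]
  -- Step C: the difference telescopes to the term at j = m+1
  have hC : Finset.Icc (m + 1) (2 * m + 1)
      = insert (m + 1) (Finset.Icc (m + 1 + 1) (2 * m + 1)) := by
    ext x; simp only [Finset.mem_Icc, Finset.mem_insert]; omega
  rw [hC, Finset.sum_insert (by simp [Finset.Icc_add_one_left_eq_Ioc])]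
  -- Step D: final algebraic identity
  have hch : (Nat.choose (2 * (m + 1)) (m + 1) : ℝ)
      = 2 * (Nat.choose (2 * m + 1) (m + 1) : ℝ) := by
    have h1 : Nat.choose (2 * m + 1 + 1) (m + 1)
        = Nat.choose (2 * m + 1) m + Nat.choose (2 * m + 1) (m + 1) :=
      Nat.choose_succ_succ (2 * m + 1) m
    have h2 : Nat.choose (2 * m + 1) m = Nat.choose (2 * m + 1) (m + 1) := by
      have := Nat.choose_symm (n := 2 * m + 1) (k := m + 1) (by omega)
      simpa [show 2 * m + 1 - (m + 1) = m by omega] using this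
    have : Nat.choose (2 * (m + 1)) (m + 1) = 2 * Nat.choose (2 * m + 1) (m + 1) := by
      rw [show 2 * (m + 1) = 2 * m + 1 + 1 by ring, h1, h2]; ring
    exact_mod_cast congrArg (Nat.cast (R := ℝ)) this
  have hsub2 : 2 * m + 1 - (m + 1) = m := by omega
  have hsub3 : m + 1 - 1 = m := by omega
  rw [hsub2, hsub3, hch]
  have hα : α ^ (m + 1) = α * α ^ m := by ring
  push_cast
  rw [hα, mul_pow]
  ring
end

section
/- Fix a natural number n ≥ 1 and a real t ≥ 0. Then the function G : [0,1/2] → ℝ defined by G(α) = e^{-t}·α + (1 − e^{-t})·(∑_{k=n+1}^{2n} C(2n,k) α^{k}(1-α)^{2n-k} + (1/2)·C(2n,n)·(α(1-α))^{n}) is convex on the interval [0,1/2]. -/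
open Finset Real

/-- Derivative of the tail sum. -/
lemma sum_hasDeriv (n : ℕ) (hn : 1 ≤ n) (α : ℝ) :
    HasDerivAt (fun α : ℝ => ∑ k ∈ Finset.Icc (n + 1) (2 * n),
        (Nat.choose (2 * n) k : ℝ) * α ^ k * (1 - α) ^ (2 * n - k))
      (((n : ℝ) + 1) * (Nat.choose (2 * n) (n + 1) : ℝ) * α ^ n * (1 - α) ^ (n - 1)) α := by
  set a : ℕ → ℝ := fun k => (k : ℝ) * (Nat.choose (2 * n) k : ℝ) * α ^ (k - 1) * (1 - α) ^ (2 * n - k) with ha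
  have key : ∀ k ∈ Finset.Icc (n + 1) (2 * n),
      HasDerivAt (fun α : ℝ => (Nat.choose (2 * n) k : ℝ) * α ^ k * (1 - α) ^ (2 * n - k))
        (a k - a (k + 1)) α := by
    intro k hk
    simp only [Finset.mem_Icc] at hk
    obtain ⟨hk1, hk2⟩ := hk
    have h1 : HasDerivAt (fun α : ℝ => α ^ k) ((k : ℝ) * α ^ (k - 1)) α := by
      simpa using hasDerivAt_pow k α
    have hb : HasDerivAt (fun α : ℝ => 1 - α) (-1) α := by
      simpa using (hasDerivAt_id' α).const_sub (1 : ℝ)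
    have h2 : HasDerivAt (fun α : ℝ => (1 - α) ^ (2 * n - k))
        (((2 * n - k : ℕ) : ℝ) * (1 - α) ^ (2 * n - k - 1) * (-1)) α := hb.pow _
    have hmain := ((h1.mul h2).const_mul ((Nat.choose (2 * n) k : ℝ)))
    have hfun : (fun α : ℝ => (Nat.choose (2 * n) k : ℝ) * α ^ k * (1 - α) ^ (2 * n - k))
        = fun α : ℝ => (Nat.choose (2 * n) k : ℝ) * (α ^ k * (1 - α) ^ (2 * n - k)) := by
      funext x; ring
    rw [hfun]
    have hcast : ((2 * n - k : ℕ) : ℝ) = 2 * (n : ℝ) - k := by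
      push_cast [hk2]; ring
    have hch : ((k : ℝ) + 1) * (Nat.choose (2 * n) (k + 1) : ℝ)
        = (2 * (n : ℝ) - k) * (Nat.choose (2 * n) k : ℝ) := by
      have h0 := Nat.choose_succ_right_eq (2 * n) k
      have h' := congrArg (fun m : ℕ => (m : ℝ)) h0
      push_cast [hk2] at h'
      push_cast
      linarith [h']
    have hval : a k - a (k + 1)
        = (Nat.choose (2 * n) k : ℝ) *
          ((k : ℝ) * α ^ (k - 1) * (1 - α) ^ (2 * n - k)
            + α ^ k * (((2 * n - k : ℕ) : ℝ) * (1 - α) ^ (2 * n - k - 1) * (-1))) := by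
      rcases eq_or_lt_of_le hk2 with heq | hlt
      · subst heq
        have hz : (Nat.choose (2 * n) (2 * n + 1) : ℝ) = 0 := by
          norm_cast; exact Nat.choose_eq_zero_of_lt (by omega)
        simp only [ha, Nat.sub_self, pow_zero, hz]
        push_cast
        ring
      · have e1 : 2 * n - k = (2 * n - (k + 1)) + 1 := by omega
        have e2 : k = (k - 1) + 1 := by omega
        have e3 : 2 * n - k - 1 = 2 * n - (k + 1) := by omega
        simp only [ha, Nat.add_sub_cancel]
        rw [hcast]
        push_cast
        rw [hch, e3, e1, pow_succ]
        ring
    rw [hval]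
    exact hmain
  have hsum := HasDerivAt.fun_sum key
  have htel : (∑ k ∈ Finset.Icc (n + 1) (2 * n), (a k - a (k + 1)))
      = a (n + 1) - a (2 * n + 1) := by
    rw [← Finset.Ico_add_one_right_eq_Icc, Finset.sum_Ico_eq_sum_range]
    have hr : 2 * n + 1 - (n + 1) = n := by omega
    rw [hr]
    calc (∑ i ∈ Finset.range n, (a (n + 1 + i) - a (n + 1 + i + 1)))
        = ∑ i ∈ Finset.range n, (a (n + 1 + i) - a (n + 1 + (i + 1))) :=
          Finset.sum_congr rfl fun i _ => by rw [show n + 1 + i + 1 = n + 1 + (i + 1) from by omega]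
      _ = a (n + 1 + 0) - a (n + 1 + n) := Finset.sum_range_sub' (fun i => a (n + 1 + i)) n
      _ = a (n + 1) - a (2 * n + 1) := by
          rw [show n + 1 + 0 = n + 1 from by omega, show n + 1 + n = 2 * n + 1 from by omega]
  rw [htel] at hsum
  have h0 : a (2 * n + 1) = 0 := by
    have hz : (Nat.choose (2 * n) (2 * n + 1) : ℝ) = 0 := by
      norm_cast; exact Nat.choose_eq_zero_of_lt (by omega)
    simp only [ha, hz]
    ring
  have h1 : a (n + 1) = ((n : ℝ) + 1) * (Nat.choose (2 * n) (n + 1) : ℝ) * α ^ n * (1 - α) ^ (n - 1) := by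
    simp only [ha, Nat.add_sub_cancel]
    have : 2 * n - (n + 1) = n - 1 := by omega
    rw [this]; push_cast; ring
  rw [h0, h1, sub_zero] at hsum
  exact hsum

/-- Convexity in α on [0,1/2] of the marginal `μ_t(α)` of median dynamics on `K_{2n}`. -/
theorem stmt_8 (n : ℕ) (hn : 1 ≤ n) (t : ℝ) (ht : 0 ≤ t) :
    ConvexOn ℝ (Set.Icc (0 : ℝ) (1 / 2)) (fun α : ℝ =>
      Real.exp (-t) * α + (1 - Real.exp (-t)) *
        ((∑ k ∈ Finset.Icc (n + 1) (2 * n),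
            (Nat.choose (2 * n) k : ℝ) * α ^ k * (1 - α) ^ (2 * n - k))
          + (1 / 2) * (Nat.choose (2 * n) n : ℝ) * (α * (1 - α)) ^ n)) := by
  set e := Real.exp (-t) with he
  have he1 : e ≤ 1 := by
    rw [he]; exact Real.exp_le_one_iff.mpr (by linarith)
  set C := (Nat.choose (2 * n) n : ℝ) with hC
  have hC0 : 0 ≤ C := by positivity
  have hg : ∀ α : ℝ, HasDerivAt (fun α : ℝ =>
      e * α + (1 - e) *
        ((∑ k ∈ Finset.Icc (n + 1) (2 * n),
            (Nat.choose (2 * n) k : ℝ) * α ^ k * (1 - α) ^ (2 * n - k))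
          + 1 / 2 * C * (α * (1 - α)) ^ n))
      (e + (1 - e) * ((n : ℝ) / 2 * C * (α * (1 - α)) ^ (n - 1))) α := by
    intro α
    have hs := sum_hasDeriv n hn α
    have hb : HasDerivAt (fun α : ℝ => α * (1 - α)) (1 - 2 * α) α := by
      have h := (hasDerivAt_id α).fun_mul ((hasDerivAt_id' α).const_sub (1 : ℝ))
      simp only [id] at h
      rw [show (1 : ℝ) - 2 * α = 1 * (1 - α) + α * -1 by ring]
      exact h
    have hq : HasDerivAt (fun α : ℝ => (α * (1 - α)) ^ n)
        (((n : ℕ) : ℝ) * (α * (1 - α)) ^ (n - 1) * (1 - 2 * α)) α := hb.pow n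
    have hcomb := ((hasDerivAt_id α).const_mul e).add
      ((hs.add (hq.const_mul ((1 : ℝ) / 2 * C))).const_mul (1 - e))
    have hD : e + (1 - e) * ((n : ℝ) / 2 * C * (α * (1 - α)) ^ (n - 1))
        = e * 1 + (1 - e) *
            (((n : ℝ) + 1) * (Nat.choose (2 * n) (n + 1) : ℝ) * α ^ n * (1 - α) ^ (n - 1)
              + (1 : ℝ) / 2 * C * (((n : ℕ) : ℝ) * (α * (1 - α)) ^ (n - 1) * (1 - 2 * α))) := by
      have hch : ((n : ℝ) + 1) * (Nat.choose (2 * n) (n + 1) : ℝ) = (n : ℝ) * C := by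
        have h0 := Nat.choose_succ_right_eq (2 * n) n
        have h' := congrArg (fun m : ℕ => (m : ℝ)) h0
        have h2 : 2 * n - n = n := by omega
        rw [h2] at h'
        push_cast at h'
        rw [hC]; push_cast; linarith
      have hpow : α ^ n * (1 - α) ^ (n - 1) = α * (α * (1 - α)) ^ (n - 1) := by
        have hx : α ^ n = α * α ^ (n - 1) := by
          conv_lhs => rw [show n = (n - 1) + 1 by omega]
          rw [pow_succ]; ring
        rw [hx, mul_pow]; ring
      have h1 : ((n : ℝ) + 1) * (Nat.choose (2 * n) (n + 1) : ℝ) * α ^ n * (1 - α) ^ (n - 1)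
          = (n : ℝ) * C * (α * (α * (1 - α)) ^ (n - 1)) := by
        rw [show ((n : ℝ) + 1) * (Nat.choose (2 * n) (n + 1) : ℝ) * α ^ n * (1 - α) ^ (n - 1)
            = (((n : ℝ) + 1) * (Nat.choose (2 * n) (n + 1) : ℝ)) * (α ^ n * (1 - α) ^ (n - 1)) from
            by ring, hch, hpow]
      rw [h1]
      ring
    rw [hD]
    exact hcomb.congr_deriv rfl
  apply MonotoneOn.convexOn_of_deriv (convex_Icc _ _)
  · apply Continuous.continuousOn
    apply Continuous.add (by fun_prop)
    apply Continuous.mul continuous_const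
    apply Continuous.add ?_ (by fun_prop)
    exact continuous_finset_sum _ (fun k _ => by fun_prop)
  · intro x _
    exact ((hg x).differentiableAt).differentiableWithinAt
  · intro x hx y hy hxy
    rw [interior_Icc] at hx hy
    rw [(hg x).deriv, (hg y).deriv]
    have hx0 : 0 < x := hx.1
    have hx1 : x < 1 / 2 := hx.2
    have hy1 : y ≤ 1 / 2 := le_of_lt hy.2
    have hmono : x * (1 - x) ≤ y * (1 - y) := by nlinarith
    have hxpos : 0 ≤ x * (1 - x) := by nlinarith
    have hp : (x * (1 - x)) ^ (n - 1) ≤ (y * (1 - y)) ^ (n - 1) :=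
      pow_le_pow_left₀ hxpos hmono _
    have hcoef : 0 ≤ (1 - e) * ((n : ℝ) / 2 * C) :=
      mul_nonneg (by linarith) (by positivity)
    nlinarith [mul_le_mul_of_nonneg_left hp hcoef]
end

section
/- For every real p with 0 ≤ p ≤ 1 and every real t ≥ 0, the following identity of convergent series holds: p³ + p³·∑_{j=1}^{∞} (p(1-p))^{j}·(j + 2 − e^{-t}) + (1-p)³·∑_{j=1}^{∞} (p(1-p))^{j}·(j − 1 + e^{-t}) + 2·∑_{j=1}^{∞} (p(1-p))^{j+1}·j = 3p² − 2p³ − e^{-t}·p(1-p)(2p−1). -/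
/-- Evaluation of the series giving `P[ξ_t^p(0) = 1]` for majority dynamics on `ℤ`.
The sums `∑_{j=1}^{∞}` are written as `tsum`s over `j : ℕ` via the shift `j ↦ j + 1`. -/
theorem stmt_9 (p t : ℝ) (hp0 : 0 ≤ p) (hp1 : p ≤ 1) (ht : 0 ≤ t) :
    p ^ 3
      + p ^ 3 * (∑' j : ℕ, (p * (1 - p)) ^ (j + 1) * (((j : ℝ) + 1) + 2 - Real.exp (-t)))
      + (1 - p) ^ 3 *
          (∑' j : ℕ, (p * (1 - p)) ^ (j + 1) * (((j : ℝ) + 1) - 1 + Real.exp (-t)))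
      + 2 * (∑' j : ℕ, (p * (1 - p)) ^ ((j + 1) + 1) * ((j : ℝ) + 1))
    = 3 * p ^ 2 - 2 * p ^ 3 - Real.exp (-t) * p * (1 - p) * (2 * p - 1) := by
  set q := p * (1 - p) with hq
  set e := Real.exp (-t) with he
  have hq0 : 0 ≤ q := mul_nonneg hp0 (by linarith)
  have hq1 : q < 1 := by nlinarith [sq_nonneg (1 - 2 * p)]
  have hnorm : ‖q‖ < 1 := by rwa [Real.norm_eq_abs, abs_of_nonneg hq0]
  have hd : 1 - q > 0 := by linarith
  -- geometric sums
  have hgeo : ∑' j : ℕ, q ^ (j + 1) = q / (1 - q) := by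
    have := tsum_geometric_of_lt_one hq0 hq1
    calc ∑' j : ℕ, q ^ (j + 1) = ∑' j : ℕ, q * q ^ j := by
          refine tsum_congr fun j => by ring
      _ = q * (1 - q)⁻¹ := by rw [tsum_mul_left, this]
      _ = q / (1 - q) := by rw [div_eq_mul_inv]
  have harith : ∑' j : ℕ, q ^ (j + 1) * ((j : ℝ) + 1) = q / (1 - q) ^ 2 := by
    have hmain : ∑' n : ℕ, (n : ℝ) * q ^ n = q / (1 - q) ^ 2 :=
      tsum_coe_mul_geometric_of_norm_lt_one hnorm
    have hs : Summable (fun n : ℕ => (n : ℝ) * q ^ n) :=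
      (summable_pow_mul_geometric_of_norm_lt_one 1 hnorm).congr fun n => by
        push_cast; ring
    have := Summable.tsum_eq_zero_add hs
    simp only [Nat.cast_zero, zero_mul, pow_zero, zero_add, Nat.cast_add, Nat.cast_one] at this
    rw [hmain] at this
    rw [this]
    refine tsum_congr fun j => by push_cast; ring
  have hs1 : Summable (fun j : ℕ => q ^ (j + 1) * ((j : ℝ) + 1)) := by
    have hs : Summable (fun n : ℕ => (n : ℝ) * q ^ n) :=
      (summable_pow_mul_geometric_of_norm_lt_one 1 hnorm).congr fun n => by
        push_cast; ring
    have := (summable_nat_add_iff 1).mpr hs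
    refine this.congr fun j => ?_
    push_cast
    ring
  have hs0 : Summable (fun j : ℕ => q ^ (j + 1)) := by
    have := (summable_geometric_of_lt_one hq0 hq1).mul_left q
    refine this.congr fun j => by ring
  -- decompose first tsum
  have hT1 : ∑' j : ℕ, q ^ (j + 1) * (((j : ℝ) + 1) + 2 - e)
      = q / (1 - q) ^ 2 + (2 - e) * (q / (1 - q)) := by
    have : ∀ j : ℕ, q ^ (j + 1) * (((j : ℝ) + 1) + 2 - e)
        = q ^ (j + 1) * ((j : ℝ) + 1) + (2 - e) * q ^ (j + 1) := fun j => by ring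
    rw [tsum_congr this, Summable.tsum_add hs1 (hs0.mul_left _), harith, tsum_mul_left, hgeo]
  have hT2 : ∑' j : ℕ, q ^ (j + 1) * (((j : ℝ) + 1) - 1 + e)
      = q / (1 - q) ^ 2 + (e - 1) * (q / (1 - q)) := by
    have : ∀ j : ℕ, q ^ (j + 1) * (((j : ℝ) + 1) - 1 + e)
        = q ^ (j + 1) * ((j : ℝ) + 1) + (e - 1) * q ^ (j + 1) := fun j => by ring
    rw [tsum_congr this, Summable.tsum_add hs1 (hs0.mul_left _), harith, tsum_mul_left, hgeo]
  have hT3 : ∑' j : ℕ, q ^ ((j + 1) + 1) * ((j : ℝ) + 1) = q * (q / (1 - q) ^ 2) := by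
    have : ∀ j : ℕ, q ^ ((j + 1) + 1) * ((j : ℝ) + 1)
        = q * (q ^ (j + 1) * ((j : ℝ) + 1)) := fun j => by ring
    rw [tsum_congr this, tsum_mul_left, harith]
  rw [hT1, hT2, hT3]
  have h1q : 1 - q = 1 - p + p ^ 2 := by rw [hq]; ring
  have hne : (1 : ℝ) - p * (1 - p) ≠ 0 := by rw [← hq]; linarith
  rw [hq]
  field_simp
  ring
end

section
/- Fix a real t ≥ 0. Then the function G : [0,1/2] → ℝ defined by G(p) = 3p² − 2p³ − e^{-t}·p(1-p)(2p−1) is convex on the interval [0,1/2]. -/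
/-- Convexity in p on [0,1/2] of `P[ξ_t^p(0) = 1]` for majority dynamics on `ℤ`. -/
theorem stmt_11 (t : ℝ) (ht : 0 ≤ t) :
    ConvexOn ℝ (Set.Icc (0 : ℝ) (1 / 2)) (fun p : ℝ =>
      3 * p ^ 2 - 2 * p ^ 3 - Real.exp (-t) * p * (1 - p) * (2 * p - 1)) := by
  set a := Real.exp (-t) with ha
  have ha1 : a ≤ 1 := by rw [ha]; exact Real.exp_le_one_iff.mpr (by linarith)
  have h1 : ∀ x : ℝ, HasDerivAt (fun p : ℝ =>
      3 * p ^ 2 - 2 * p ^ 3 - a * p * (1 - p) * (2 * p - 1))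
      ((6 * a - 6) * x ^ 2 + (6 - 6 * a) * x + a) x := by
    intro x
    have hx : HasDerivAt (fun p : ℝ => p) 1 x := hasDerivAt_id x
    have h := (((hx.pow 2).const_mul 3).sub ((hx.pow 3).const_mul 2)).sub
      ((((hx.const_mul a).mul ((hasDerivAt_const x 1).sub hx)).mul
        ((hx.const_mul 2).sub_const 1)))
    exact h.congr_deriv (by simp; ring)
  have h2 : ∀ x : ℝ, HasDerivAt (fun x : ℝ => (6 * a - 6) * x ^ 2 + (6 - 6 * a) * x + a)
      ((12 * a - 12) * x + (6 - 6 * a)) x := by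
    intro x
    have hx : HasDerivAt (fun p : ℝ => p) 1 x := hasDerivAt_id x
    have h := (((hx.pow 2).const_mul (6 * a - 6)).add (hx.const_mul (6 - 6 * a))).add_const a
    exact h.congr_deriv (by simp; ring)
  have hd : deriv (fun p : ℝ => 3 * p ^ 2 - 2 * p ^ 3 - a * p * (1 - p) * (2 * p - 1))
      = fun x : ℝ => (6 * a - 6) * x ^ 2 + (6 - 6 * a) * x + a :=
    funext fun x => (h1 x).deriv
  apply convexOn_of_deriv2_nonneg (convex_Icc _ _)
  · exact fun x _ => (h1 x).differentiableAt.continuousAt.continuousWithinAt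
  · exact fun x _ => (h1 x).differentiableAt.differentiableWithinAt
  · intro x _
    rw [hd]
    exact (h2 x).differentiableAt.differentiableWithinAt
  · intro x hx
    rw [interior_Icc] at hx
    have : deriv^[2] (fun p : ℝ => 3 * p ^ 2 - 2 * p ^ 3 - a * p * (1 - p) * (2 * p - 1)) x
        = (12 * a - 12) * x + (6 - 6 * a) := by
      show deriv (deriv _) x = _
      rw [hd, (h2 x).deriv]
    rw [this]
    nlinarith [hx.1, hx.2]
end

section
/- The function g : ℝ → ℝ defined by g(p) = p·(1 − (1-p)^6) + (1-p)·p^6 is not convex on the interval [0,1/2], i.e., ¬ ConvexOn ℝ (Icc 0 (1/2)) g. -/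
/-- The function `p ↦ p(1 − (1−p)⁶) + (1−p)p⁶` is not convex on `[0, 1/2]`. -/
theorem stmt_14 :
    ¬ ConvexOn ℝ (Set.Icc (0 : ℝ) (1 / 2))
      (fun p : ℝ => p * (1 - (1 - p) ^ 6) + (1 - p) * p ^ 6) := by
  intro h
  have hx : (1/4 : ℝ) ∈ Set.Icc (0:ℝ) (1/2) := by norm_num
  have hy : (1/2 : ℝ) ∈ Set.Icc (0:ℝ) (1/2) := by norm_num
  have := h.2 hx hy (by norm_num : (0:ℝ) ≤ 1/2) (by norm_num : (0:ℝ) ≤ 1/2)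
    (by norm_num : (1/2 : ℝ) + 1/2 = 1)
  norm_num at this
end

section
/- Let n be a natural number and let f : (Fin n → Bool) → Bool be monotone (if x ≤ y pointwise, with false < true, then f(x) ≤ f(y)) and odd (f of the pointwise negation of x equals the negation of f(x) for every x). Then for every real p with 1/2 ≤ p ≤ 1, the expectation E_p[f] satisfies E_p[f] ≥ p; equivalently, for every p with 0 ≤ p ≤ 1/2, E_p[f] ≤ p. -/
/-- The expectation `E_p[f]` of a Boolean function under i.i.d. Bernoulli(p) bits. -/
def boolExp (n : ℕ) (f : (Fin n → Bool) → Bool) (p : ℝ) : ℝ :=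
  ∑ x : Fin n → Bool,
    p ^ (Finset.univ.filter fun i => x i = true).card *
      (1 - p) ^ (n - (Finset.univ.filter fun i => x i = true).card) *
      (if f x then (1 : ℝ) else 0)

open Finset

namespace MNT

variable {n : ℕ}

def cnt {n : ℕ} (x : Fin n → Bool) : ℕ := (Finset.univ.filter fun i => x i = true).card

def W (n : ℕ) (p : ℝ) (x : Fin n → Bool) : ℝ := p ^ cnt x * (1 - p) ^ (n - cnt x)

def Ex (n : ℕ) (G : (Fin n → Bool) → ℝ) (p : ℝ) : ℝ := ∑ x : Fin n → Bool, W n p x * G x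

lemma cnt_le (x : Fin n → Bool) : cnt x ≤ n := by
  calc cnt x ≤ Finset.univ.card := Finset.card_filter_le _ _
  _ = n := by simp

lemma cnt_cons (b : Bool) (x : Fin n → Bool) :
    cnt (Fin.cons b x) = (if b then 1 else 0) + cnt x := by
  simp only [cnt, Finset.card_filter, Fin.sum_univ_succ, Fin.cons_zero, Fin.cons_succ]

lemma W_cons (p : ℝ) (b : Bool) (x : Fin n → Bool) :
    W (n+1) p (Fin.cons b x) = (if b then p else (1-p)) * W n p x := by
  have hle := cnt_le x
  cases b
  · have h : n + 1 - cnt x = (n - cnt x) + 1 := by omega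
    simp only [W, cnt_cons, Bool.false_eq_true, reduceIte, Nat.zero_add, zero_add]
    rw [h, pow_succ]
    ring
  · have h : n + 1 - (1 + cnt x) = n - cnt x := by omega
    simp only [W, cnt_cons, reduceIte]
    rw [h, add_comm 1 (cnt x), pow_succ]
    ring

lemma Ex_split (G : (Fin (n+1) → Bool) → ℝ) (p : ℝ) :
    Ex (n+1) G p = (1-p) * Ex n (fun x => G (Fin.cons false x)) p
      + p * Ex n (fun x => G (Fin.cons true x)) p := by
  rw [Ex, ← Fintype.sum_equiv (Fin.consEquiv (fun _ => Bool))
      (fun z => W (n+1) p (Fin.consEquiv _ z) * G (Fin.consEquiv _ z))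
      (fun y => W (n+1) p y * G y) (fun z => rfl),
    Fintype.sum_prod_type]
  have hce : ∀ (b : Bool) (x : Fin n → Bool),
      (Fin.consEquiv (fun _ => Bool)) (b, x) = Fin.cons b x := fun _ _ => rfl
  simp only [Fintype.sum_bool, hce, W_cons, if_true, if_false]
  rw [Ex, Ex, Finset.mul_sum, Finset.mul_sum, add_comm]
  congr 1 <;> exact Finset.sum_congr rfl fun x _ => mul_assoc _ _ _

lemma Ex_one (p : ℝ) : Ex n (fun _ => (1:ℝ)) p = 1 := by
  induction n with
  | zero => simp [Ex, W, cnt]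
  | succ m ih => rw [Ex_split]; rw [ih]; ring

lemma Ex_add (G H : (Fin n → Bool) → ℝ) (p : ℝ) :
    Ex n (fun x => G x + H x) p = Ex n G p + Ex n H p := by
  simp [Ex, mul_add, Finset.sum_add_distrib]

lemma Ex_sub (G H : (Fin n → Bool) → ℝ) (p : ℝ) :
    Ex n (fun x => G x - H x) p = Ex n G p - Ex n H p := by
  simp [Ex, mul_sub, Finset.sum_sub_distrib]

lemma W_nonneg {p : ℝ} (hp : 0 ≤ p) (hp1 : p ≤ 1) (x : Fin n → Bool) : 0 ≤ W n p x := by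
  have h1 : (0:ℝ) ≤ 1 - p := by linarith
  exact mul_nonneg (pow_nonneg hp _) (pow_nonneg h1 _)

lemma Ex_mono {p : ℝ} (hp : 0 ≤ p) (hp1 : p ≤ 1) {G H : (Fin n → Bool) → ℝ}
    (h : ∀ x, G x ≤ H x) : Ex n G p ≤ Ex n H p := by
  apply Finset.sum_le_sum
  intro x _
  exact mul_le_mul_of_nonneg_left (h x) (W_nonneg hp hp1 x)

lemma Ex_K (p : ℝ) : Ex n (fun x => (cnt x : ℝ)) p = n * p := by
  induction n with
  | zero => simp [Ex, W, cnt]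
  | succ m ih =>
    rw [Ex_split]
    have e0 : Ex m (fun x => ((cnt (Fin.cons false x) : ℕ) : ℝ)) p = m * p := by
      have h0 : (fun x : Fin m → Bool => ((cnt (Fin.cons false x) : ℕ) : ℝ))
          = fun x => (cnt x : ℝ) := by funext x; simp [cnt_cons]
      rw [h0, ih]
    have e1 : Ex m (fun x => ((cnt (Fin.cons true x) : ℕ) : ℝ)) p = 1 + m * p := by
      have h1 : (fun x : Fin m → Bool => ((cnt (Fin.cons true x) : ℕ) : ℝ))
          = fun x => (1:ℝ) + (cnt x : ℝ) := by
        funext x; simp [cnt_cons]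
      rw [h1, Ex_add, Ex_one, ih]
    rw [e0, e1]
    push_cast
    ring

def Mon {n : ℕ} (G : (Fin n → Bool) → ℝ) : Prop :=
  ∀ x y : Fin n → Bool, (∀ i, x i ≤ y i) → G x ≤ G y

lemma Mon.cons {G : (Fin (n+1) → Bool) → ℝ} (hG : Mon G) (b : Bool) :
    Mon (fun x => G (Fin.cons b x)) := by
  intro x y h
  apply hG
  intro i
  refine Fin.cases ?_ ?_ i
  · simp
  · intro j; simpa using h j

lemma Mon.cons_le {G : (Fin (n+1) → Bool) → ℝ} (hG : Mon G) (x : Fin n → Bool) :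
    G (Fin.cons false x) ≤ G (Fin.cons true x) := by
  apply hG
  intro i
  refine Fin.cases ?_ ?_ i <;> simp

theorem harris {p : ℝ} (hp : 0 ≤ p) (hp1 : p ≤ 1) {G H : (Fin n → Bool) → ℝ}
    (hG : Mon G) (hH : Mon H) :
    Ex n G p * Ex n H p ≤ Ex n (fun x => G x * H x) p := by
  induction n with
  | zero =>
    simp [Ex, W, cnt]
  | succ m ih =>
    rw [Ex_split G, Ex_split H, Ex_split (fun x => G x * H x)]
    have ihff := ih (hG.cons false) (hH.cons false)
    have ihtt := ih (hG.cons true) (hH.cons true)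
    set a0 := Ex m (fun x => G (Fin.cons false x)) p
    set a1 := Ex m (fun x => G (Fin.cons true x)) p
    set b0 := Ex m (fun x => H (Fin.cons false x)) p
    set b1 := Ex m (fun x => H (Fin.cons true x)) p
    have ha : a0 ≤ a1 := Ex_mono hp hp1 (fun x => hG.cons_le x)
    have hb : b0 ≤ b1 := Ex_mono hp hp1 (fun x => hH.cons_le x)
    have h1 : (0:ℝ) ≤ 1 - p := by linarith
    nlinarith [ihff, ihtt, mul_nonneg hp h1, mul_nonneg (sub_nonneg.2 ha) (sub_nonneg.2 hb),
      mul_nonneg (mul_nonneg hp h1) (mul_nonneg (sub_nonneg.2 ha) (sub_nonneg.2 hb))]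

end MNT
-- appended part
namespace MNT
open Finset

variable {n : ℕ}

lemma sum_not (g : (Fin n → Bool) → ℝ) :
    ∑ x : Fin n → Bool, g (fun i => !x i) = ∑ x : Fin n → Bool, g x := by
  apply Fintype.sum_bijective (fun x : Fin n → Bool => fun i => !x i)
  · exact Function.Involutive.bijective (fun x => by funext i; simp)
  · intro x; rfl

lemma cnt_not (x : Fin n → Bool) : cnt (fun i => !x i) = n - cnt x := by
  have h : (Finset.univ.filter fun i => (!x i) = true)
      = (Finset.univ.filter fun i => ¬ (x i = true)) := by
    apply Finset.filter_congr; intro i _; simp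
  rw [cnt, h, Finset.filter_not, Finset.card_sdiff_of_subset (Finset.filter_subset _ _)]
  simp [cnt]

lemma cnt_mono {x y : Fin n → Bool} (h : ∀ i, x i ≤ y i) : cnt x ≤ cnt y := by
  apply Finset.card_le_card
  intro i hi
  simp only [Finset.mem_filter, Finset.mem_univ, true_and] at *
  have := h i
  rw [hi] at this
  revert this; cases y i <;> simp

lemma cnt_strict {x y : Fin n → Bool} (h : ∀ i, x i ≤ y i) (hne : x ≠ y) :
    cnt x < cnt y := by
  apply Finset.card_lt_card
  constructor
  · intro i hi
    simp only [Finset.mem_filter, Finset.mem_univ, true_and] at *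
    have := h i
    rw [hi] at this
    revert this; cases y i <;> simp
  · intro hsub
    apply hne
    funext i
    have hxy := h i
    by_cases hy : y i = true
    · have : i ∈ Finset.univ.filter fun j => y j = true := by simp [hy]
      have := hsub this
      simp only [Finset.mem_filter, Finset.mem_univ, true_and] at this
      rw [this, hy]
    · have hy' : y i = false := by simpa using hy
      rw [hy'] at hxy ⊢
      exact le_antisymm hxy (by simp)

lemma cnt_top : cnt (fun _ : Fin n => true) = n := by simp [cnt]

section WithF
variable (f : (Fin n → Bool) → Bool)

lemma Ex_flip (hodd : ∀ x : Fin n → Bool, f (fun i => ! x i) = ! f x) (p : ℝ) :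
    Ex n (fun x => if f x then (1:ℝ) else 0) (1-p)
      = 1 - Ex n (fun x => if f x then (1:ℝ) else 0) p := by
  rw [Ex, ← sum_not (fun x => W n (1-p) x * (if f x then (1:ℝ) else 0))]
  have key : ∀ x : Fin n → Bool,
      W n (1-p) (fun i => !x i) * (if f (fun i => !x i) then (1:ℝ) else 0)
      = W n p x * (1 - if f x then (1:ℝ) else 0) := by
    intro x
    have h1 : cnt (fun i => !x i) = n - cnt x := cnt_not x
    have h2 : n - (n - cnt x) = cnt x := by have := cnt_le x; omega
    have h3 : (1 - (1-p)) = p := by ring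
    rw [W, h1, h2, hodd x, h3, W]
    cases hfx : f x <;> simp <;> ring
  rw [Finset.sum_congr rfl (fun x _ => key x)]
  have h4 : (fun x : Fin n → Bool => W n p x * (1 - if f x then (1:ℝ) else 0))
      = fun x => W n p x * ((fun _ => (1:ℝ)) x - (fun y => if f y then (1:ℝ) else 0) x) := rfl
  calc (∑ x : Fin n → Bool, W n p x * (1 - if f x then (1:ℝ) else 0))
      = Ex n (fun x => (1:ℝ) - (if f x then (1:ℝ) else 0)) p := rfl
    _ = Ex n (fun _ => (1:ℝ)) p - Ex n (fun x => if f x then (1:ℝ) else 0) p :=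
        Ex_sub _ _ _
    _ = 1 - Ex n (fun x => if f x then (1:ℝ) else 0) p := by rw [Ex_one]

lemma f_top (hmono : ∀ x y : Fin n → Bool, (∀ i, x i ≤ y i) → f x ≤ f y)
    (hodd : ∀ x : Fin n → Bool, f (fun i => ! x i) = ! f x) :
    f (fun _ => true) = true := by
  have h := hodd (fun _ => false)
  simp only [Bool.not_false] at h
  have h2 := hmono (fun _ => false) (fun _ => true) (fun i => by simp)
  cases hb : f (fun _ => false)
  · rw [hb] at h; exact h
  · rw [hb] at h2
    revert h2; cases f (fun _ => true) <;> simp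

lemma Ex_lb {p : ℝ} (hp : 0 ≤ p) (hp1 : p ≤ 1)
    (htop : f (fun _ => true) = true) :
    p ^ n ≤ Ex n (fun x => if f x then (1:ℝ) else 0) p := by
  have h := Finset.single_le_sum (f := fun x : Fin n → Bool =>
      W n p x * (if f x then (1:ℝ) else 0)) (fun x _ => ?_) (Finset.mem_univ (fun _ => true))
  · calc (p:ℝ)^n = W n p (fun _ => true) * (if f (fun _ => true) then (1:ℝ) else 0) := by
          rw [W, cnt_top, htop]; simp
      _ ≤ _ := h
  · apply mul_nonneg (W_nonneg hp hp1 x)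
    split <;> norm_num


lemma term_deriv (p c : ℝ) (K M : ℕ) :
    p * (1-p) * (((K:ℝ) * p^(K-1) * (1-p)^M + p^K * ((M:ℝ) * (1-p)^(M-1) * (-1))) * c)
      = p^K * (1-p)^M * (c * ((K:ℝ) - ((K:ℝ) + (M:ℝ))*p)) := by
  cases K <;> cases M <;> push_cast <;>
    (try simp only [Nat.add_sub_cancel]) <;> ring

noncomputable def Dphi (p : ℝ) : ℝ := ∑ x : Fin n → Bool,
    ((cnt x : ℝ) * p ^ (cnt x - 1) * (1-p) ^ (n - cnt x)
      + p ^ cnt x * (((n - cnt x : ℕ) : ℝ) * (1-p) ^ (n - cnt x - 1) * (-1)))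
      * (if f x then (1:ℝ) else 0)

lemma hasDeriv_phi (p : ℝ) :
    HasDerivAt (fun q => Ex n (fun x => if f x then (1:ℝ) else 0) q) (Dphi f p) p := by
  have h0 : ∀ q : ℝ, Ex n (fun x => if f x then (1:ℝ) else 0) q
      = ∑ x : Fin n → Bool, q ^ cnt x * (1-q) ^ (n - cnt x) * (if f x then (1:ℝ) else 0) := by
    intro q; rfl
  simp only [h0]
  apply HasDerivAt.fun_sum
  intro x _
  have h1 : HasDerivAt (fun q : ℝ => (1 - q)) (-1) p := by
    simpa using (hasDerivAt_id p).const_sub 1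
  have h2 : HasDerivAt (fun q : ℝ => (1-q) ^ (n - cnt x))
      (((n - cnt x : ℕ):ℝ) * (1-p)^(n - cnt x - 1) * (-1)) p := by
    have := HasDerivAt.comp p (hasDerivAt_pow (n - cnt x) (1-p)) h1
    simpa [Function.comp_def] using this
  exact ((hasDerivAt_pow (cnt x) p).mul h2).mul_const _

lemma key1 (p : ℝ) :
    p * (1-p) * Dphi f p
      = Ex n (fun x => (if f x then (1:ℝ) else 0) * ((cnt x : ℝ) - (n:ℝ) * p)) p := by
  rw [Dphi, Finset.mul_sum, Ex]
  apply Finset.sum_congr rfl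
  intro x _
  have hk := cnt_le x
  have hn : (n:ℝ) = (cnt x : ℝ) + ((n - cnt x : ℕ) : ℝ) := by
    rw [← Nat.cast_add, Nat.add_sub_cancel' hk]
  rw [hn, W]
  exact term_deriv p _ (cnt x) (n - cnt x)

lemma monF (hmono : ∀ x y : Fin n → Bool, (∀ i, x i ≤ y i) → f x ≤ f y) :
    Mon (fun x => if f x then (1:ℝ) else 0) := by
  intro x y h
  have hf := hmono x y h
  cases hfx : f x <;> cases hfy : f y <;>
    simp only [hfx, hfy, Bool.false_eq_true, reduceIte]
  · exact le_refl _
  · norm_num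
  · rw [hfx, hfy] at hf; exact absurd hf (by decide)
  · exact le_refl _

lemma monKF (hmono : ∀ x y : Fin n → Bool, (∀ i, x i ≤ y i) → f x ≤ f y) :
    Mon (fun x => (cnt x : ℝ) - (if f x then (1:ℝ) else 0)) := by
  intro x y h
  have hf := hmono x y h
  have hc : (cnt x : ℝ) ≤ (cnt y : ℝ) := by exact_mod_cast cnt_mono h
  cases hfx : f x <;> cases hfy : f y <;>
    simp only [hfx, hfy, Bool.false_eq_true, reduceIte]
  · linarith
  · have hne : x ≠ y := fun he => by rw [he, hfy] at hfx; exact Bool.noConfusion hfx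
    have h1 : (cnt x : ℝ) + 1 ≤ (cnt y : ℝ) := by exact_mod_cast cnt_strict h hne
    linarith
  · rw [hfx, hfy] at hf; exact absurd hf (by decide)
  · linarith

lemma key2 (hmono : ∀ x y : Fin n → Bool, (∀ i, x i ≤ y i) → f x ≤ f y)
    {p : ℝ} (hp : 0 ≤ p) (hp1 : p ≤ 1) :
    Ex n (fun x => if f x then (1:ℝ) else 0) p
        * (1 - Ex n (fun x => if f x then (1:ℝ) else 0) p)
      ≤ p * (1-p) * Dphi f p := by
  rw [key1]
  set F : (Fin n → Bool) → ℝ := fun x => if f x then (1:ℝ) else 0 with hF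
  set φ := Ex n F p with hφ
  have hh := harris hp hp1 (monF f hmono) (monKF f hmono)
  have e1 : Ex n (fun x => (cnt x : ℝ) - F x) p = n * p - φ := by
    rw [Ex_sub, Ex_K]
  have e2 : (fun x : Fin n → Bool => F x * ((cnt x : ℝ) - F x))
      = fun x => F x * (cnt x : ℝ) - F x := by
    funext x
    simp only [hF]
    cases f x <;> simp
  have e3 : Ex n (fun x => F x * ((cnt x:ℝ) - F x)) p
      = Ex n (fun x => F x * (cnt x : ℝ)) p - φ := by
    rw [e2, Ex_sub]
  have e4 : (fun x : Fin n → Bool => F x * ((cnt x : ℝ) - (n:ℝ)*p))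
      = fun x => F x * (cnt x : ℝ) - ((n:ℝ)*p) * F x := by
    funext x; ring
  have e5 : Ex n (fun x => F x * ((cnt x:ℝ) - (n:ℝ)*p)) p
      = Ex n (fun x => F x * (cnt x : ℝ)) p - (n:ℝ)*p*φ := by
    rw [e4, Ex_sub]
    congr 1
    rw [hφ, Ex, Ex, Finset.mul_sum]
    exact Finset.sum_congr rfl fun x _ => by ring
  rw [e1, e3] at hh
  rw [e5]
  nlinarith [hh]

theorem main1 (hmono : ∀ x y : Fin n → Bool, (∀ i, x i ≤ y i) → f x ≤ f y)
    (hodd : ∀ x : Fin n → Bool, f (fun i => ! x i) = ! f x)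
    (p : ℝ) (hp : 1/2 ≤ p) (hp1 : p ≤ 1) :
    p ≤ Ex n (fun x => if f x then (1:ℝ) else 0) p := by
  classical
  have htop := f_top f hmono hodd
  have hhalf : Ex n (fun x => if f x then (1:ℝ) else 0) (1/2 : ℝ) = 1/2 := by
    have flip := Ex_flip f hodd (1/2 : ℝ)
    rw [show (1:ℝ) - 1/2 = 1/2 by norm_num] at flip
    linarith
  rcases eq_or_lt_of_le hp1 with h1 | h1
  · rw [h1]
    have := Ex_lb f (by norm_num : (0:ℝ) ≤ 1) (le_refl 1) htop
    simpa using this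
  rcases eq_or_lt_of_le hp with h2 | h2
  · rw [← h2, hhalf]
  -- main case 1/2 < p < 1
  set F : (Fin n → Bool) → ℝ := fun x => if f x then (1:ℝ) else 0 with hF
  set φ : ℝ → ℝ := fun q => Ex n F q with hphi
  have hbounds : ∀ q : ℝ, 0 < q → q < 1 → 0 < φ q ∧ φ q < 1 := by
    intro q hq0 hq1
    constructor
    · have hlb := Ex_lb f (le_of_lt hq0) (le_of_lt hq1) htop
      have : (0:ℝ) < q ^ n := pow_pos hq0 n
      calc (0:ℝ) < q ^ n := this
        _ ≤ φ q := hlb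
    · have flip := Ex_flip f hodd (1-q)
      rw [show (1:ℝ) - (1-q) = q by ring] at flip
      have hlb2 := Ex_lb f (by linarith : (0:ℝ) ≤ 1-q) (by linarith : (1:ℝ)-q ≤ 1) htop
      have hpow : (0:ℝ) < (1-q)^n := pow_pos (by linarith) n
      have : φ q = 1 - φ (1-q) := flip
      have : φ (1-q) ≥ (1-q)^n := hlb2
      calc φ q = 1 - φ (1-q) := flip
        _ ≤ 1 - (1-q)^n := by linarith
        _ < 1 := by linarith
  set L : ℝ → ℝ := fun q => Real.log (φ q) - Real.log (1 - φ q)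
      - Real.log q + Real.log (1-q) with hL
  have hLder : ∀ q : ℝ, 0 < q → q < 1 →
      HasDerivAt L (Dphi f q / φ q - (-(Dphi f q)) / (1 - φ q) - q⁻¹ + (-1)/(1-q)) q := by
    intro q hq0 hq1
    obtain ⟨hφ0, hφ1⟩ := hbounds q hq0 hq1
    have d1 : HasDerivAt (fun t => Real.log (φ t)) (Dphi f q / φ q) q :=
      (hasDeriv_phi f q).log (ne_of_gt hφ0)
    have d2' : HasDerivAt (fun t => 1 - φ t) (-(Dphi f q)) q :=
      (hasDeriv_phi f q).const_sub 1
    have d2 : HasDerivAt (fun t => Real.log (1 - φ t)) ((-(Dphi f q)) / (1 - φ q)) q :=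
      d2'.log (by linarith)
    have d3 : HasDerivAt (fun t : ℝ => Real.log t) q⁻¹ q := Real.hasDerivAt_log (ne_of_gt hq0)
    have d4' : HasDerivAt (fun t : ℝ => 1 - t) (-1) q := by
      simpa using (hasDerivAt_id q).const_sub 1
    have d4 : HasDerivAt (fun t : ℝ => Real.log (1 - t)) ((-1)/(1-q)) q :=
      d4'.log (by linarith)
    exact ((d1.sub d2).sub d3).add d4
  have hmonL : MonotoneOn L (Set.Icc (1/2 : ℝ) p) := by
    apply monotoneOn_of_deriv_nonneg (convex_Icc _ _)
    · intro q hq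
      obtain ⟨hql, hqr⟩ := hq
      exact (hLder q (by linarith) (by linarith)).differentiableAt.continuousAt.continuousWithinAt
    · intro q hq
      rw [interior_Icc] at hq
      obtain ⟨hql, hqr⟩ := hq
      exact (hLder q (by linarith) (by linarith)).differentiableAt.differentiableWithinAt
    · intro q hq
      rw [interior_Icc] at hq
      obtain ⟨hql, hqr⟩ := hq
      have hq0 : (0:ℝ) < q := by linarith
      have hq1 : q < 1 := by linarith
      obtain ⟨hφ0, hφ1⟩ := hbounds q hq0 hq1
      have hder := hLder q hq0 hq1
      rw [hder.deriv]
      have hkey := key2 f hmono (le_of_lt hq0) (le_of_lt hq1)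
      have h1φ : (0:ℝ) < 1 - φ q := by linarith
      have h1q : (0:ℝ) < 1 - q := by linarith
      have hqq : (0:ℝ) < q * (1-q) := mul_pos hq0 h1q
      have hφφ : (0:ℝ) < φ q * (1 - φ q) := mul_pos hφ0 h1φ
      have hD : φ q * (1 - φ q) ≤ q * (1-q) * Dphi f q := hkey
      have hDpos : 0 < Dphi f q := by
        by_contra hcon
        push_neg at hcon
        nlinarith
      have heq : Dphi f q / φ q - (-(Dphi f q)) / (1 - φ q) - q⁻¹ + (-1)/(1-q)
          = (q * (1-q) * Dphi f q - φ q * (1 - φ q)) / (φ q * (1 - φ q) * (q * (1-q))) := by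
        field_simp
        ring
      rw [heq]
      apply div_nonneg (by linarith) (le_of_lt (mul_pos hφφ hqq))
  have hhalfmem : (1/2 : ℝ) ∈ Set.Icc (1/2:ℝ) p := Set.mem_Icc.mpr ⟨le_refl _, hp⟩
  have hpmem : p ∈ Set.Icc (1/2:ℝ) p := Set.mem_Icc.mpr ⟨hp, le_refl _⟩
  have hmono2 := hmonL hhalfmem hpmem hp
  have hL0 : L (1/2 : ℝ) = 0 := by
    simp only [hL, hphi]
    rw [hhalf]
    norm_num
  rw [hL0] at hmono2
  obtain ⟨hφ0, hφ1⟩ := hbounds p (by linarith) h1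
  have hp0 : (0:ℝ) < p := by linarith
  have h1p : (0:ℝ) < 1 - p := by linarith
  have h1φ : (0:ℝ) < 1 - φ p := by linarith
  have hlog : Real.log ((1 - φ p) * p) ≤ Real.log (φ p * (1-p)) := by
    rw [Real.log_mul (ne_of_gt hφ0) (ne_of_gt h1p),
      Real.log_mul (ne_of_gt h1φ) (ne_of_gt hp0)]
    simp only [hL] at hmono2
    linarith
  have hfin := (Real.log_le_log_iff (mul_pos h1φ hp0) (mul_pos hφ0 h1p)).mp hlog
  nlinarith [hfin]

end WithF
end MNT


/-- Mossel–Neeman–Tamuz: for a monotone odd Boolean function, `E_p[f] ≥ p` for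
`p ∈ [1/2, 1]`, and equivalently `E_p[f] ≤ p` for `p ∈ [0, 1/2]`. -/
theorem stmt_16 (n : ℕ) (f : (Fin n → Bool) → Bool)
    (hmono : ∀ x y : Fin n → Bool, (∀ i, x i ≤ y i) → f x ≤ f y)
    (hodd : ∀ x : Fin n → Bool, f (fun i => ! x i) = ! f x) :
    (∀ p : ℝ, 1 / 2 ≤ p → p ≤ 1 → p ≤ boolExp n f p) ∧
    (∀ p : ℝ, 0 ≤ p → p ≤ 1 / 2 → boolExp n f p ≤ p) := by
  have hEq : ∀ q : ℝ, boolExp n f q = MNT.Ex n (fun x => if f x then (1:ℝ) else 0) q :=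
    fun _ => rfl
  constructor
  · intro p hp hp1
    rw [hEq]
    exact MNT.main1 f hmono hodd p hp hp1
  · intro p hp hp2
    have flip := MNT.Ex_flip f hodd p
    have hm := MNT.main1 f hmono hodd (1-p) (by linarith) (by linarith)
    rw [hEq]
    linarith [flip, hm]
end

section
/- Let l be a list of real numbers of odd length, and define the median of l as the element at (0-indexed) position (l.length − 1)/2 of the list obtained by sorting l in nondecreasing order. Then for every real p, the median of the list l.map (fun a => if a ≤ p then (1:ℝ) else 0) equals (if median(l) ≤ p then (1:ℝ) else 0). -/
/-- The median of a list of reals: the element at (0-indexed) position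
`(length − 1) / 2` of the list sorted in nondecreasing order. -/
noncomputable def listMedian (l : List ℝ) : ℝ :=
  (l.insertionSort (· ≤ ·)).getD ((l.length - 1) / 2) 0

/-- The threshold indicator `a ↦ 1_{a ≤ p}` commutes with the median of an
odd-length list. -/
theorem stmt_17 (l : List ℝ) (hl : Odd l.length) (p : ℝ) :
    listMedian (l.map fun a => if a ≤ p then (1 : ℝ) else 0)
      = if listMedian l ≤ p then (1 : ℝ) else 0 := by
  obtain ⟨k, hk⟩ := hl
  set f : ℝ → ℝ := fun a => if a ≤ p then (1 : ℝ) else 0 with hf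
  have hanti : ∀ a b : ℝ, a ≤ b → f b ≤ f a := by
    intro a b hab
    simp only [hf]
    split_ifs with h1 h2 <;> norm_num
    exact h2 (hab.trans h1)
  set s := l.insertionSort (· ≤ ·) with hs
  have hslen : s.length = l.length := List.length_insertionSort _ _
  have hsorted : s.Pairwise (· ≤ ·) := List.pairwise_insertionSort _ _
  have hperm : s.Perm l := List.perm_insertionSort _ _
  have key : (l.map f).insertionSort (· ≤ ·) = (s.map f).reverse := by
    have h1 : ((l.map f).insertionSort (· ≤ ·)).Perm ((s.map f).reverse) :=
      ((l.map f).perm_insertionSort _).trans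
        ((hperm.map f).symm.trans (s.map f).reverse_perm.symm)
    have h2 : ((l.map f).insertionSort (· ≤ ·)).Pairwise (· ≤ ·) :=
      List.pairwise_insertionSort _ _
    have h3 : ((s.map f).reverse).Pairwise (· ≤ ·) := by
      rw [List.pairwise_reverse]
      exact List.Pairwise.map f (fun a b hab => hanti a b hab) hsorted
    exact List.Perm.eq_of_pairwise' h2 h3 h1
  have hmflen : (s.map f).length = 2 * k + 1 := by
    rw [List.length_map, hslen, hk]
  have hklt : k < (s.map f).length := by rw [hmflen]; omega
  have hmed : listMedian (l.map f) = f (s.getD k 0) := by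
    unfold listMedian
    rw [key, List.length_map, hk]
    have hpos : (2 * k + 1 - 1) / 2 = k := by omega
    rw [hpos]
    have hkr : k < (s.map f).reverse.length := by simpa using hklt
    rw [List.getD_eq_getElem _ _ hkr, List.getElem_reverse]
    have hidx : (s.map f).length - 1 - k = k := by rw [hmflen]; omega
    have hk' : k < s.length := by rw [hslen, hk]; omega
    simp only [hidx]
    rw [List.getElem_map]
    rw [List.getD_eq_getElem _ _ hk']
  have hmedl : listMedian l = s.getD k 0 := by
    unfold listMedian
    rw [← hs, hk]
    congr 1
    omega
  rw [hmed, hmedl, hf]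
end

section
/- Let V be a countable type, G a simple graph on V in which every vertex has degree at most d, and let μ be the product measure on configurations ω : V → Bool in which each coordinate is an independent Bernoulli(p) random variable (true with probability p). If d·p < 1, then for every vertex x, the μ-probability that the open cluster of x is infinite is zero, where the open cluster of x is the set of vertices y such that there is a walk in G from x to y all of whose vertices v (including x and y) satisfy ω(v) = true. -/
open MeasureTheory
open scoped ENNReal

/-- Finset of candidate chain-lists of length `m` continuing from `x`. -/
noncomputable def chainFinset {V : Type*} [DecidableEq V] (G : SimpleGraph V)
    (h : ∀ v : V, (G.neighborSet v).Finite) : ℕ → V → Finset (List V)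
  | 0, _ => {[]}
  | (m+1), x =>
      (h x).toFinset.biUnion (fun z => (chainFinset G h m z).image (z :: ·))

lemma mem_chainFinset {V : Type*} [DecidableEq V] {G : SimpleGraph V}
    {h : ∀ v : V, (G.neighborSet v).Finite} :
    ∀ {m : ℕ} {x : V} {l : List V}, List.Chain G.Adj x l → l.length = m →
      l ∈ chainFinset G h m x := by
  intro m
  induction m with
  | zero =>
    intro x l _ hl
    simp [chainFinset, List.length_eq_zero_iff.mp hl]
  | succ m ih =>
    intro x l hc hl
    match l, hc with
    | z :: t, List.IsChain.cons_cons hadj hc' =>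
      simp only [chainFinset, Finset.mem_biUnion, Set.Finite.mem_toFinset]
      exact ⟨z, hadj, Finset.mem_image_of_mem _ (ih hc' (by simpa using hl))⟩

lemma length_of_mem_chainFinset {V : Type*} [DecidableEq V] {G : SimpleGraph V}
    {h : ∀ v : V, (G.neighborSet v).Finite} :
    ∀ {m : ℕ} {x : V} {l : List V}, l ∈ chainFinset G h m x → l.length = m := by
  intro m
  induction m with
  | zero => intro x l hl; simp only [chainFinset, Finset.mem_singleton] at hl; simp [hl]
  | succ m ih =>
    intro x l hl
    simp only [chainFinset, Finset.mem_biUnion, Finset.mem_image] at hl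
    obtain ⟨z, _, t, ht, rfl⟩ := hl
    simp [ih ht]

lemma card_chainFinset {V : Type*} [DecidableEq V] {G : SimpleGraph V}
    {h : ∀ v : V, (G.neighborSet v).Finite} {d : ℕ}
    (hd : ∀ v : V, (G.neighborSet v).ncard ≤ d) :
    ∀ (m : ℕ) (x : V), (chainFinset G h m x).card ≤ d ^ m := by
  intro m
  induction m with
  | zero => intro x; simp [chainFinset]
  | succ m ih =>
    intro x
    classical
    calc (chainFinset G h (m+1) x).card
        ≤ ∑ z ∈ (h x).toFinset, ((chainFinset G h m z).image (z :: ·)).card :=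
          Finset.card_biUnion_le
      _ ≤ ∑ z ∈ (h x).toFinset, d ^ m :=
          Finset.sum_le_sum fun z _ => Finset.card_image_le.trans (ih z)
      _ = (h x).toFinset.card * d ^ m := by rw [Finset.sum_const, smul_eq_mul]
      _ ≤ d * d ^ m := by
          have hx := hd x
          rw [Set.ncard_eq_toFinset_card _ (h x)] at hx
          exact Nat.mul_le_mul_right _ hx
      _ = d ^ (m+1) := by ring

/-- Subcritical site percolation on a bounded-degree countable graph: if `d·p < 1` and
`μ` is the i.i.d. Bernoulli(p) product measure on configurations `ω : V → Bool`
(characterized by its values on cylinder events), then the open cluster of any vertex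
`x` (the set of vertices reachable from `x` by a walk all of whose vertices are open)
is almost surely finite. -/
theorem stmt_19 {V : Type*} [Countable V] (G : SimpleGraph V) (d : ℕ)
    (hdeg : ∀ v : V, (G.neighborSet v).Finite ∧ (G.neighborSet v).ncard ≤ d)
    (p : ℝ) (hp0 : 0 ≤ p) (hp1 : p ≤ 1)
    (μ : Measure (V → Bool)) [IsProbabilityMeasure μ]
    (hμ : ∀ (s : Finset V) (b : V → Bool),
      μ {ω : V → Bool | ∀ v ∈ s, ω v = b v}
        = ∏ v ∈ s, (if b v then ENNReal.ofReal p else ENNReal.ofReal (1 - p)))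
    (hdp : (d : ℝ) * p < 1) (x : V) :
    μ {ω : V → Bool |
        {y : V | ∃ w : G.Walk x y, ∀ v ∈ w.support, ω v = true}.Infinite} = 0 := by
  classical
  set q := ENNReal.ofReal p with hq
  have hN : ∀ v, (G.neighborSet v).Finite := fun v => (hdeg v).1
  -- cylinder measure of "all vertices in a nodup list are open"
  have hcyl : ∀ l : List V, l.Nodup →
      μ {ω : V → Bool | ∀ v ∈ l, ω v = true} = q ^ l.length := by
    intro l hl
    have hset : {ω : V → Bool | ∀ v ∈ l, ω v = true}
        = {ω : V → Bool | ∀ v ∈ l.toFinset, ω v = (fun _ => true) v} := by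
      ext ω; simp
    rw [hset, hμ]
    simp [Finset.prod_const, List.toFinset_card_of_nodup hl, hq]
  set F : ℕ → Finset (List V) := fun m =>
    (chainFinset G hN m x).filter (fun l => (x :: l).Nodup) with hF
  set A : ℕ → Set (V → Bool) := fun m =>
    ⋃ l ∈ F m, {ω : V → Bool | ∀ v ∈ x :: l, ω v = true} with hA
  -- measure bound for each A m
  have hAm : ∀ m, μ (A m) ≤ (d : ℝ≥0∞) ^ m * q ^ (m+1) := by
    intro m
    calc μ (A m) ≤ ∑ l ∈ F m, μ {ω : V → Bool | ∀ v ∈ x :: l, ω v = true} :=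
        measure_biUnion_finset_le _ _
      _ ≤ ∑ l ∈ F m, q ^ (m+1) := by
          refine Finset.sum_le_sum fun l hl => ?_
          simp only [hF, Finset.mem_filter] at hl
          rw [hcyl _ hl.2]
          rw [List.length_cons, length_of_mem_chainFinset hl.1]
      _ = (F m).card * q ^ (m+1) := by rw [Finset.sum_const, nsmul_eq_mul]
      _ ≤ (d ^ m : ℕ) * q ^ (m+1) := by
          gcongr
          exact_mod_cast Nat.cast_le.mpr
            ((Finset.card_filter_le _ _).trans (card_chainFinset (fun v => (hdeg v).2) m x))
      _ = (d : ℝ≥0∞) ^ m * q ^ (m+1) := by push_cast; ring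
  -- coverage: infinite cluster implies long open self-avoiding paths
  have hcover : ∀ n : ℕ,
      {ω : V → Bool | {y : V | ∃ w : G.Walk x y, ∀ v ∈ w.support, ω v = true}.Infinite}
        ⊆ ⋃ k, A (k + n) := by
    intro n ω hω
    simp only [Set.mem_setOf_eq] at hω
    set R : Finset V := (Finset.range n).biUnion
        (fun m => (chainFinset G hN m x).biUnion (fun l => (x :: l).toFinset)) with hR
    obtain ⟨y, hy, hyR⟩ := hω.exists_notMem_finset R
    obtain ⟨w, hw⟩ := hy
    set qw := w.bypass with hqw
    have hsub : ∀ v ∈ qw.support, ω v = true := fun v hv => hw v (w.support_bypass_subset hv)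
    have hnodup : qw.support.Nodup := (w.bypass_isPath).support_nodup
    set t := qw.support.tail with ht
    have hst : qw.support = x :: t := qw.support_eq_cons
    have hchain : List.Chain G.Adj x t := by
      have hc := qw.isChain_adj_support
      rw [hst] at hc
      exact hc
    have hlen : t.length = qw.length := by
      have hl := qw.length_support
      rw [hst] at hl
      simpa using hl
    have hmem : t ∈ chainFinset G hN qw.length x := mem_chainFinset hchain hlen
    have hymem : y ∈ (x :: t).toFinset := by
      rw [List.mem_toFinset, ← hst]; exact qw.end_mem_support
    have hge : n ≤ qw.length := by
      by_contra hlt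
      push_neg at hlt
      exact hyR (Finset.mem_biUnion.mpr ⟨qw.length, Finset.mem_range.mpr hlt,
        Finset.mem_biUnion.mpr ⟨t, hmem, hymem⟩⟩)
    refine Set.mem_iUnion.mpr ⟨qw.length - n, ?_⟩
    have hcancel : qw.length - n + n = qw.length := Nat.sub_add_cancel hge
    rw [hcancel]
    refine Set.mem_iUnion₂.mpr ⟨t, ?_, ?_⟩
    · simp only [hF, Finset.mem_filter]
      exact ⟨hmem, hst ▸ hnodup⟩
    · intro v hv
      exact hsub v (hst ▸ hv)
  -- summability
  set f : ℕ → ℝ≥0∞ := fun m => (d : ℝ≥0∞) ^ m * q ^ (m+1) with hf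
  have hr : (d : ℝ≥0∞) * q = ENNReal.ofReal ((d : ℝ) * p) := by
    rw [ENNReal.ofReal_mul (by positivity), hq, ENNReal.ofReal_natCast]
  have hrlt : (d : ℝ≥0∞) * q < 1 := by
    rw [hr]
    exact ENNReal.ofReal_lt_one.mpr hdp
  have hfsum : ∑' m, f m ≠ ⊤ := by
    have heq : ∀ m, f m = q * ((d : ℝ≥0∞) * q) ^ m := by
      intro m
      simp only [hf, mul_pow, pow_succ]
      ring
    rw [tsum_congr heq, ENNReal.tsum_mul_left, ENNReal.tsum_geometric]
    refine ENNReal.mul_ne_top ENNReal.ofReal_ne_top (ENNReal.inv_ne_top.mpr ?_)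
    rw [Ne, tsub_eq_zero_iff_le]
    exact fun h => absurd hrlt (not_lt.mpr h)
  have htail := ENNReal.tendsto_sum_nat_add f hfsum
  have hle : ∀ n : ℕ,
      μ {ω : V → Bool | {y : V | ∃ w : G.Walk x y, ∀ v ∈ w.support, ω v = true}.Infinite}
        ≤ ∑' k, f (k + n) := by
    intro n
    calc μ _ ≤ μ (⋃ k, A (k + n)) := measure_mono (hcover n)
      _ ≤ ∑' k, μ (A (k + n)) := measure_iUnion_le _
      _ ≤ ∑' k, f (k + n) := ENNReal.tsum_le_tsum fun k => hAm _
  have hfinal := ge_of_tendsto' htail hle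
  exact le_antisymm hfinal zero_le
end
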